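/- Fix a point p in ℤ^n. Define the canonical form of a nonzero vector a in ℤ^n as a divided by the gcd of the absolute values of its components, negated if necessary so that the first nonzero component is positive. Then two points q1, q2 (both distinct from p) are collinear with p (i.e., q1 - p and q2 - p are linearly dependent over ℚ) if and only if the canonical forms of q1 - p and q2 - p are equal. -/

import Mathlib

open Classical in
/-- The first nonzero component of `b` is nonnegative (hence positive if `b ≠ 0`). -/
def FirstNonzeroNonneg {n : ℕ} (b : Fin n → ℤ) : Prop :=
  ∀ i : Fin n, (∀ j : Fin n, j < i → b j = 0) → 0 ≤ b i

open Classical in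
/-- Canonical form of a vector in `ℤ^n`: divide by the gcd of the (absolute values of the)
components, and negate if necessary so the first nonzero component is positive. -/
noncomputable def canon {n : ℕ} (a : Fin n → ℤ) : Fin n → ℤ :=
  let g : ℤ := Finset.univ.gcd a
  let b : Fin n → ℤ := fun i => a i / g
  if FirstNonzeroNonneg b then b else -b

lemma exists_first {n : ℕ} {a : Fin n → ℤ} (ha : a ≠ 0) :
    ∃ i, a i ≠ 0 ∧ ∀ j, j < i → a j = 0 := by
  classical
  have hne : (Finset.univ.filter (fun i => a i ≠ 0)).Nonempty := by
    rcases Function.ne_iff.1 ha with ⟨i, hi⟩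
    exact ⟨i, Finset.mem_filter.2 ⟨Finset.mem_univ i, hi⟩⟩
  set S := Finset.univ.filter (fun i => a i ≠ 0)
  refine ⟨S.min' hne, ?_, ?_⟩
  · have := S.min'_mem hne; simpa [S] using this
  · intro j hj
    by_contra hja
    exact absurd (S.min'_le j (by simp [S, hja])) (not_le.2 hj)

lemma fnn_neg {n : ℕ} {a : Fin n → ℤ} (ha : a ≠ 0) (h : ¬ FirstNonzeroNonneg a) :
    FirstNonzeroNonneg (-a) := by
  obtain ⟨i0, hi0, hpre⟩ := exists_first ha
  have hneg : a i0 < 0 := by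
    rw [FirstNonzeroNonneg] at h
    push_neg at h
    obtain ⟨k, hk, hk2⟩ := h
    have hki : k ≤ i0 := not_lt.1 fun hlt => hi0 (hk i0 hlt)
    rcases lt_or_eq_of_le hki with hlt | heq
    · exact absurd (hpre k hlt) (by intro h0; rw [h0] at hk2; exact absurd hk2 (by norm_num))
    · rwa [heq] at hk2
  intro i hi
  rcases lt_trichotomy i i0 with hlt | heq | hgt
  · simp [hpre i hlt]
  · rw [heq]; simpa using hneg.le
  · exact absurd (neg_eq_zero.1 (hi i0 hgt)) hi0

/-- If `a` and `b` are primitive vectors with nonneg first nonzero component, and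
`a` is a rational multiple of `b`, then `a = b`. -/
lemma primitive_eq {n : ℕ} {a b : Fin n → ℤ} (ha0 : a ≠ 0)
    (hga : Finset.univ.gcd a = 1) (hgb : Finset.univ.gcd b = 1)
    (hfa : FirstNonzeroNonneg a) (hfb : FirstNonzeroNonneg b)
    (c : ℚ) (h : ∀ i, (a i : ℚ) = c * b i) : a = b := by
  have key : ∀ i, c.num * b i = (c.den : ℤ) * a i := by
    intro i
    have : ((c.num * b i : ℤ) : ℚ) = ((c.den : ℤ) * a i : ℚ) := by
      push_cast
      rw [h i]
      have hden : (c.den : ℚ) ≠ 0 := by exact_mod_cast c.den_ne_zero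
      have hc : (c.num : ℚ) = c * c.den := (div_eq_iff hden).1 (Rat.num_div_den c)
      rw [hc]; ring
    exact_mod_cast this
  have hcop : IsCoprime (c.den : ℤ) c.num := by
    rw [Int.isCoprime_iff_gcd_eq_one, Int.gcd_comm]
    exact c.reduced
  have hden1 : (c.den : ℤ) = 1 := by
    have hdvd : (c.den : ℤ) ∣ Finset.univ.gcd b := by
      apply Finset.dvd_gcd
      intro i _
      have : (c.den : ℤ) ∣ c.num * b i := ⟨a i, key i⟩
      exact (hcop.dvd_of_dvd_mul_left this)
    rw [hgb] at hdvd
    have := Int.isUnit_iff.1 (isUnit_of_dvd_one hdvd)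
    rcases this with h1 | h1
    · exact h1
    · exfalso
      have hdp : (0:ℤ) < c.den := by exact_mod_cast c.pos
      omega
  have key2 : ∀ i, c.num * b i = a i := by intro i; rw [key i, hden1, one_mul]
  have hnum : c.num = 1 ∨ c.num = -1 := by
    have hdvd : c.num ∣ Finset.univ.gcd a := by
      apply Finset.dvd_gcd
      intro i _
      exact ⟨b i, (key2 i).symm⟩
    rw [hga] at hdvd
    exact Int.isUnit_iff.1 (isUnit_of_dvd_one hdvd)
  rcases hnum with h1 | h1
  · funext i; rw [← key2 i, h1, one_mul]
  · exfalso
    have hab : ∀ i, a i = - b i := by intro i; rw [← key2 i, h1]; ring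
    obtain ⟨i0, hi0, hpre⟩ := exists_first ha0
    have h1 : 0 ≤ a i0 := hfa i0 hpre
    have h2 : 0 ≤ b i0 := hfb i0 (fun j hj => by have := hpre j hj; rw [hab j] at this; omega)
    have := hab i0
    omega

lemma canon_spec {n : ℕ} {a : Fin n → ℤ} (ha : a ≠ 0) :
    ∃ m : ℤ, m ≠ 0 ∧ (∀ i, a i = m * canon a i) ∧
      Finset.univ.gcd (canon a) = 1 ∧ FirstNonzeroNonneg (canon a) ∧ canon a ≠ 0 := by
  classical
  set g : ℤ := Finset.univ.gcd a with hg
  obtain ⟨i0, hi0, -⟩ := exists_first ha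
  have hgdvd : ∀ i, g ∣ a i := fun i => Finset.gcd_dvd (Finset.mem_univ i)
  have hgne : g ≠ 0 := by
    intro h0
    exact hi0 (by simpa [h0] using hgdvd i0)
  set b : Fin n → ℤ := fun i => a i / g with hb
  have hab : ∀ i, a i = g * b i := fun i => (Int.mul_ediv_cancel' (hgdvd i)).symm
  have hgcdb : Finset.univ.gcd b = 1 := by
    simpa [hb, hg] using Finset.gcd_div_eq_one (f := a) (Finset.mem_univ i0) hi0
  have hbne : b ≠ 0 := by
    intro h0
    apply hi0
    rw [hab i0, congrFun h0 i0]; simp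
  have hcanon : canon a = if FirstNonzeroNonneg b then b else -b := rfl
  by_cases hf : FirstNonzeroNonneg b
  · refine ⟨g, hgne, ?_, ?_, ?_, ?_⟩ <;> rw [hcanon, if_pos hf]
    · exact hab
    · exact hgcdb
    · exact hf
    · exact hbne
  · have hgcdnb : Finset.univ.gcd (-b) = 1 := by
      have hd1 : Finset.univ.gcd (-b) ∣ (1 : ℤ) := by
        rw [← hgcdb]
        apply Finset.dvd_gcd
        intro i _
        have : Finset.univ.gcd (-b) ∣ -b i := Finset.gcd_dvd (Finset.mem_univ i)
        exact (dvd_neg.1 this)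
      have hnn : 0 ≤ Finset.univ.gcd (-b) :=
        Int.nonneg_of_normalize_eq_self (Finset.normalize_gcd)
      rcases Int.isUnit_iff.1 (isUnit_of_dvd_one hd1) with h1 | h1
      · exact h1
      · omega
    refine ⟨-g, by omega, ?_, ?_, ?_, ?_⟩ <;> rw [hcanon, if_neg hf]
    · intro i; rw [hab i]; simp
    · exact hgcdnb
    · exact fnn_neg hbne hf
    · simpa using hbne

theorem canon_eq_iff_collinear {n : ℕ} (p q1 q2 : Fin n → ℤ)
    (h1 : q1 ≠ p) (h2 : q2 ≠ p) :
    ¬ LinearIndependent ℚ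
        ![(fun i => ((q1 i - p i : ℤ) : ℚ)), (fun i => ((q2 i - p i : ℤ) : ℚ))] ↔
      canon (fun i => q1 i - p i) = canon (fun i => q2 i - p i) := by
  set a : Fin n → ℤ := fun i => q1 i - p i with hadef
  set b : Fin n → ℤ := fun i => q2 i - p i with hbdef
  have ha0 : a ≠ 0 := by
    intro h0
    apply h1
    funext i
    have := congrFun h0 i
    simp [hadef] at this
    omega
  have hb0 : b ≠ 0 := by
    intro h0
    apply h2
    funext i
    have := congrFun h0 i
    simp [hbdef] at this
    omega
  obtain ⟨ma, hma, haeq, hgca, hfa, hca0⟩ := canon_spec ha0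
  obtain ⟨mb, hmb, hbeq, hgcb, hfb, hcb0⟩ := canon_spec hb0
  rw [linearIndependent_fin2]
  push_neg
  simp only [Matrix.cons_val_one, Matrix.head_cons, Matrix.cons_val_zero]
  have hvb : (fun i => ((b i : ℤ) : ℚ)) ≠ 0 := by
    intro h0
    apply hb0
    funext i
    have := congrFun h0 i
    simp at this
    exact this
  constructor
  · intro h
    obtain ⟨c, hc⟩ := h hvb
    -- hc : c • (fun i => (b i : ℚ)) = fun i => (a i : ℚ)
    have hc' : ∀ i, (a i : ℚ) = c * b i := by
      intro i
      have := congrFun hc i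
      simp only [Pi.smul_apply, smul_eq_mul] at this
      show ((q1 i - p i : ℤ) : ℚ) = c * ((q2 i - p i : ℤ) : ℚ)
      push_cast
      push_cast at this
      linarith
    apply primitive_eq hca0 hgca hgcb hfa hfb (c * mb / ma)
    intro i
    have h1 : (ma : ℚ) * canon a i = (a i : ℚ) := by exact_mod_cast (haeq i).symm
    have h2 : (mb : ℚ) * canon b i = (b i : ℚ) := by exact_mod_cast (hbeq i).symm
    have hmaq : (ma : ℚ) ≠ 0 := by exact_mod_cast hma
    have key : (ma:ℚ) * canon a i = c * ((mb:ℚ) * canon b i) := by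
      rw [h1, h2]; exact hc' i
    field_simp
    linear_combination key
  · intro h _
    refine ⟨(ma : ℚ) / (mb : ℚ), ?_⟩
    funext i
    have hmbq : (mb : ℚ) ≠ 0 := by exact_mod_cast hmb
    have h1 : (a i : ℚ) = (ma : ℚ) * canon a i := by exact_mod_cast haeq i
    have h2 : (b i : ℚ) = (mb : ℚ) * canon b i := by exact_mod_cast hbeq i
    simp only [Pi.smul_apply, smul_eq_mul]
    rw [h1, h2, h]
    field_simp
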